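/- For all nonnegative integers n and \ell, and real number r, the r-Bell numbers satisfy B_{n+\ell, r} = \sum_{j=0}^{\ell} \sum_{k=0}^{n} S_r(\ell+r, j+r) \binom{n}{k} j^{n-k} B_{k,r}. -/

import Mathlib

/-- The r-Stirling numbers of the second kind: `rStirling2 r n k` stands for
`S_r(n+r, k+r)`, satisfying the recurrence with factor `(k+r)`. -/
noncomputable def rStirling2 (r : ℝ) : ℕ → ℕ → ℝ
  | 0, 0 => 1
  | 0, _ + 1 => 0
  | n + 1, 0 => r * rStirling2 r n 0
  | n + 1, k + 1 => rStirling2 r n k + ((k + 1 : ℝ) + r) * rStirling2 r n (k + 1)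

/-- The r-Bell number: the sum over k ≤ n of `S_r(n+r,k+r)`. -/
noncomputable def rBell (r : ℝ) (n : ℕ) : ℝ :=
  ∑ k ∈ Finset.range (n + 1), rStirling2 r n k

/-!
Write `T x y n = ∑ₖ C(n,k) xⁿ⁻ᵏ yₖ`, so that `T x (T z y) = T (x + z) y`. Classifying partitions
by the block of the last non-distinguished element (a distinguished block, or a new block shared
with some of the others) gives `S_r(n+1,k+1) = r S_r(n,k+1) + T 1 (S_r(·,k)) n`, hence
`B_{n+1} = r B_n + T 1 B n`, hence `T x B (n+1) = T (x+1) B n + (x+r) T x B n`. This is the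
recurrence of `S_r(ℓ, j)` read backwards in `ℓ`, so `B_{n+ℓ} = ∑ⱼ S_r(ℓ,j) T j B n` by induction
on `ℓ`.
-/

open Finset

section BinomialTransform

variable {R : Type*} [CommSemiring R]

/-- `∑ₖ C(n,k) xⁿ⁻ᵏ yₖ`: the exponential generating function of `binomialTransform x y` is
`exp (x t)` times that of `y`, so these transforms compose additively in `x`. -/
def binomialTransform (x : R) (y : ℕ → R) (n : ℕ) : R :=
  ∑ p ∈ antidiagonal n, n.choose p.1 * (x ^ p.2 * y p.1)

theorem binomialTransform_eq_sum_range (x : R) (y : ℕ → R) (n : ℕ) :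
    binomialTransform x y n = ∑ k ∈ range (n + 1), n.choose k * (x ^ (n - k) * y k) :=
  Nat.sum_antidiagonal_eq_sum_range_succ (fun i j => n.choose i * (x ^ j * y i)) n

@[simp]
theorem binomialTransform_apply_zero (x : R) (y : ℕ → R) : binomialTransform x y 0 = y 0 := by
  simp [binomialTransform]

@[simp]
theorem binomialTransform_zero (y : ℕ → R) (n : ℕ) : binomialTransform 0 y n = y n := by
  rw [binomialTransform_eq_sum_range, sum_range_succ, sum_eq_zero fun k hk => ?_, Nat.sub_self]
  · simp
  · rw [zero_pow (Nat.sub_ne_zero_of_lt (mem_range.mp hk)), zero_mul, mul_zero]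

@[simp]
theorem binomialTransform_add (x : R) (y w : ℕ → R) (n : ℕ) :
    binomialTransform x (fun k => y k + w k) n =
      binomialTransform x y n + binomialTransform x w n := by
  simp only [binomialTransform, mul_add, sum_add_distrib]

@[simp]
theorem binomialTransform_const_mul (x a : R) (y : ℕ → R) (n : ℕ) :
    binomialTransform x (fun k => a * y k) n = a * binomialTransform x y n := by
  simp only [binomialTransform, mul_sum]
  exact sum_congr rfl fun _ _ => by ring

theorem binomialTransform_succ (x : R) (y : ℕ → R) (n : ℕ) :
    binomialTransform x y (n + 1) =
      x * binomialTransform x y n + binomialTransform x (fun k => y (k + 1)) n := by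
  rw [binomialTransform, sum_antidiagonal_choose_succ_mul (fun i j => x ^ j * y i),
    binomialTransform, binomialTransform, mul_sum]
  congr 1
  · exact sum_congr rfl fun p _ => by ring
  · refine sum_congr rfl fun p hp => ?_
    rw [Nat.choose_symm_of_eq_add (mem_antidiagonal.mp hp).symm]

theorem binomialTransform_binomialTransform (x z : R) (y : ℕ → R) (n : ℕ) :
    binomialTransform x (binomialTransform z y) n = binomialTransform (x + z) y n := by
  induction n generalizing y with
  | zero => simp
  | succ n ih =>
    simp only [binomialTransform_succ, binomialTransform_add, binomialTransform_const_mul, ih]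
    ring

theorem binomialTransform_sum {ι : Type*} (s : Finset ι) (x : R) (y : ι → ℕ → R) (n : ℕ) :
    binomialTransform x (fun k => ∑ i ∈ s, y i k) n = ∑ i ∈ s, binomialTransform x (y i) n := by
  simp only [binomialTransform, mul_sum]
  exact sum_comm

theorem binomialTransform_congr {x : R} {y w : ℕ → R} {n : ℕ} (h : ∀ k ≤ n, y k = w k) :
    binomialTransform x y n = binomialTransform x w n :=
  sum_congr rfl fun p hp => by rw [h p.1 (HasAntidiagonal.antidiagonal.fst_le hp)]

end BinomialTransform

section rStirling2

variable (r : ℝ)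

@[simp]
theorem rStirling2_zero_succ (k : ℕ) : rStirling2 r 0 (k + 1) = 0 := rfl

@[simp]
theorem rStirling2_succ_zero (n : ℕ) : rStirling2 r (n + 1) 0 = r * rStirling2 r n 0 := rfl

theorem rStirling2_succ_succ (n k : ℕ) :
    rStirling2 r (n + 1) (k + 1) = rStirling2 r n k + (k + 1 + r) * rStirling2 r n (k + 1) := rfl

theorem rStirling2_eq_zero_of_lt {n k : ℕ} (h : n < k) : rStirling2 r n k = 0 := by
  induction n generalizing k with
  | zero => obtain ⟨k, rfl⟩ := Nat.exists_eq_add_one_of_ne_zero h.ne'; rfl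
  | succ n ih =>
    obtain ⟨k, rfl⟩ := Nat.exists_eq_add_one_of_ne_zero (by omega : k ≠ 0)
    rw [rStirling2_succ_succ, ih (by omega), ih (by omega), mul_zero, add_zero]

theorem rStirling2_succ_succ_eq_binomialTransform (n k : ℕ) :
    rStirling2 r (n + 1) (k + 1) =
      r * rStirling2 r n (k + 1) + binomialTransform 1 (fun m => rStirling2 r m k) n := by
  induction n generalizing k with
  | zero => simp [rStirling2_succ_succ]
  | succ n ih =>
    rw [binomialTransform_succ]
    cases k with
    | zero =>
      simp only [rStirling2_succ_zero, binomialTransform_const_mul]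
      rw [rStirling2_succ_succ, rStirling2_succ_zero]
      linear_combination (norm := (push_cast; ring)) (1 + r) * ih 0 - r * rStirling2_succ_succ r n 0
    | succ k =>
      simp only [rStirling2_succ_succ r _ k, binomialTransform_add, binomialTransform_const_mul]
      rw [rStirling2_succ_succ r (n + 1) (k + 1)]
      linear_combination (norm := (push_cast; ring))
        ih k + (k + 2 + r) * ih (k + 1) - r * rStirling2_succ_succ r n (k + 1)

theorem sum_range_rStirling2_succ_mul (ℓ : ℕ) (F : ℕ → ℝ) :
    ∑ j ∈ range (ℓ + 2), rStirling2 r (ℓ + 1) j * F j =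
      ∑ j ∈ range (ℓ + 1), rStirling2 r ℓ j * (F (j + 1) + (j + r) * F j) := by
  have hshift : ∑ j ∈ range (ℓ + 1), (j + 1 + r) * rStirling2 r ℓ (j + 1) * F (j + 1) +
      r * rStirling2 r ℓ 0 * F 0 = ∑ j ∈ range (ℓ + 1), (j + r) * rStirling2 r ℓ j * F j := by
    rw [sum_range_succ _ ℓ, rStirling2_eq_zero_of_lt r ℓ.lt_add_one, sum_range_succ']
    push_cast
    ring
  have hsucc (j : ℕ) : rStirling2 r (ℓ + 1) (j + 1) * F (j + 1) =
      rStirling2 r ℓ j * F (j + 1) + (j + 1 + r) * rStirling2 r ℓ (j + 1) * F (j + 1) := by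
    rw [rStirling2_succ_succ, add_mul, mul_assoc]
  rw [sum_range_succ', rStirling2_succ_zero, sum_congr rfl fun j _ => hsucc j, sum_add_distrib,
    add_assoc, hshift, ← sum_add_distrib]
  exact sum_congr rfl fun j _ => by ring

end rStirling2

section rBell

variable (r : ℝ)

theorem rBell_eq_sum_range_of_lt {m N : ℕ} (h : m < N) :
    rBell r m = ∑ k ∈ range N, rStirling2 r m k := by
  rw [rBell, ← sum_range_add_sum_Ico _ (Nat.succ_le_of_lt h), sum_eq_zero fun k hk =>
    rStirling2_eq_zero_of_lt r (Nat.succ_le_iff.mp (mem_Ico.mp hk).1), add_zero]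

theorem rBell_succ (n : ℕ) : rBell r (n + 1) = r * rBell r n + binomialTransform 1 (rBell r) n :=
  calc rBell r (n + 1)
        = ∑ k ∈ range (n + 1), rStirling2 r (n + 1) (k + 1) + rStirling2 r (n + 1) 0 := by
        rw [rBell, sum_range_succ']
    _ = r * ∑ k ∈ range (n + 2), rStirling2 r n k +
          ∑ k ∈ range (n + 1), binomialTransform 1 (fun m => rStirling2 r m k) n := by
        simp only [rStirling2_succ_succ_eq_binomialTransform, sum_add_distrib, rStirling2_succ_zero,
          sum_range_succ' (fun k => rStirling2 r n k) (n + 1), mul_add, mul_sum]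
        ring
    _ = r * rBell r n + binomialTransform 1 (rBell r) n := by
        rw [← rBell_eq_sum_range_of_lt r (by omega), ← binomialTransform_sum]
        exact congrArg _ <| binomialTransform_congr fun m hm =>
          (rBell_eq_sum_range_of_lt r (by omega)).symm

theorem binomialTransform_rBell_succ (x : ℝ) (n : ℕ) :
    binomialTransform x (rBell r) (n + 1) =
      binomialTransform (x + 1) (rBell r) n + (x + r) * binomialTransform x (rBell r) n := by
  simp only [binomialTransform_succ, rBell_succ, binomialTransform_add, binomialTransform_const_mul,
    binomialTransform_binomialTransform]
  ring

theorem rBell_add_eq_sum_rStirling2_mul_binomialTransform (n ℓ : ℕ) :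
    rBell r (n + ℓ) =
      ∑ j ∈ range (ℓ + 1), rStirling2 r ℓ j * binomialTransform (j : ℝ) (rBell r) n := by
  induction ℓ generalizing n with
  | zero => simp [rStirling2]
  | succ ℓ ih =>
    rw [← add_assoc, add_right_comm, ih, sum_range_rStirling2_succ_mul]
    simp only [binomialTransform_rBell_succ, Nat.cast_succ]

end rBell

theorem rBell_spivey (n ℓ : ℕ) (r : ℝ) :
    rBell r (n + ℓ) =
      ∑ j ∈ Finset.range (ℓ + 1), ∑ k ∈ Finset.range (n + 1),
        rStirling2 r ℓ j * (n.choose k : ℝ) * (j : ℝ) ^ (n - k) * rBell r k := by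
  rw [rBell_add_eq_sum_rStirling2_mul_binomialTransform]
  refine sum_congr rfl fun j _ => ?_
  rw [binomialTransform_eq_sum_range, mul_sum]
  exact sum_congr rfl fun k _ => by ring
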